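/- Let L/ℚ be a non-Galois cubic field with Galois closure M, σ ∈ Gal(M/ℚ) of order 3, and τ the generator of Gal(M/L). Let ρ₁ be a prime element of O_M over an odd rational prime p splitting completely in M, and set α_i = N_{M/L}(σ^{i−1}ρ₁) for i = 1, 2. Let q ≠ p be an odd rational prime with exactly two primes 𝔓₁, 𝔓₂ of O_L above it, i.e. qO_L = 𝔓₁²𝔓₂ or qO_L = 𝔓₁𝔓₂ with f(𝔓₁/q) = 2, where 𝔓₁O_M = 𝔔₁ · τ𝔔₁ for a prime 𝔔₁ of O_M and 𝔓₂O_M = 𝔔₂² or 𝔔₂. Set 𝔔₃ = σ²𝔔₁. Then (α₁/𝔓₁) = (ρ₁/𝔔₁)(ρ₁/τ𝔔₁); moreover (α₂/𝔓₁) = (ρ₁/𝔔₃)(ρ₁/𝔔₁) if σ𝔔₁ = τ𝔔₁, while (α₂/𝔓₁) = (ρ₁/𝔔₃)(ρ₁/𝔔₂) if σ𝔔₁ = 𝔔₂. -/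

import Mathlib

open NumberField Module

-- The quadratic residue symbol of `x` at the prime ideal `P`:
-- `1` if `x` is a square in the residue ring `R ⧸ P`, and `-1` otherwise.
open scoped Classical in
noncomputable def legSym {R : Type*} [CommRing R] (x : R) (P : Ideal R) : ℤ :=
  if ∃ y : R, x - y ^ 2 ∈ P then 1 else -1

/-- `p` splits completely in the number field `K`. -/
def SplitsCompletelyIn (K : Type*) [Field K] [NumberField K] (p : ℕ) : Prop :=
  {P : Ideal (𝓞 K) | P.IsPrime ∧ (p : 𝓞 K) ∈ P}.ncard = Module.finrank ℚ K

/-- The image of an ideal of `𝓞 M` under the automorphism of `𝓞 M` induced by a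
field automorphism of `M`. -/
noncomputable def galMapIdeal {M : Type*} [Field M] [NumberField M] (σ : M ≃ₐ[ℚ] M)
    (I : Ideal (𝓞 M)) : Ideal (𝓞 M) :=
  Ideal.map (galRestrict ℤ ℚ M (𝓞 M) σ) I

/-!
Since `[M : L] = 2` and `τ𝔔₁` has the same norm as `𝔔₁`, taking norms in `𝔓₁ 𝓞_M = 𝔔₁ · τ𝔔₁`
gives `N𝔔₁ = N𝔓₁`, so `𝓞_L/𝔓₁ → 𝓞_M/𝔔₁` is an isomorphism and `(x/𝔓₁) = (x/𝔔₁)` for `x ∈ 𝓞_L`.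
In `𝓞_M`, `αᵢ = gρ₁ · hρ₁` for automorphisms `g, h`; these factors are units modulo `𝔔₁`
(`ρ₁ ∣ p` and `q ∈ 𝔔₁`), the symbol is multiplicative on units, and `(gρ₁/𝔔) = (ρ₁/g⁻¹𝔔)`.
This gives the formula for `α₁` and `(α₂/𝔓₁) = (ρ₁/σ²𝔔₁)(ρ₁/σ²τ𝔔₁)`. If `σ𝔔₁ = τ𝔔₁`, then
`σ²τ𝔔₁ = σ³𝔔₁ = 𝔔₁`. If `σ𝔔₁ = 𝔔₂`, then `σ²𝔔₁` is a prime above `q`, hence one of `𝔔₁`,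
`τ𝔔₁`, `𝔔₂`; as `σ` has order 3 and moves `𝔔₁`, it is neither `𝔔₁` nor `σ𝔔₁ = 𝔔₂`, so
`σ²𝔔₁ = τ𝔔₁` and `σ²τ𝔔₁ = σ⁴𝔔₁ = 𝔔₂`.
-/

namespace Ideal

variable {R S : Type*} [CommRing R] [CommRing S]

lemma notMem_of_dvd_natCast_of_coprime {Q : Ideal R} (hQ : Q ≠ ⊤) {p q : ℕ} (hpq : p.Coprime q)
    (hq : (q : R) ∈ Q) {x : R} (hx : x ∣ p) : x ∉ Q := by
  intro hxQ
  obtain ⟨a, b, hab⟩ := (Nat.isCoprime_iff_coprime.mpr hpq).map (Int.castRingHom R)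
  refine hQ ((eq_top_iff_one Q).mpr ?_)
  rw [← hab]
  simp only [map_natCast]
  exact Q.add_mem (Q.mul_mem_left _ (Q.mem_of_dvd hx hxQ)) (Q.mul_mem_left _ hq)

lemma isMaximal_of_span_singleton_eq_pow_mul [Ring.DimensionLEOne R] {x : R} (hx : x ≠ 0)
    {I J : Ideal R} [I.IsPrime] [J.IsPrime] {k : ℕ} (hk : k ≠ 0) (h : span {x} = I ^ k * J) :
    I.IsMaximal ∧ J.IsMaximal := by
  have hxI : x ∈ I := (span_singleton_le_iff_mem _).mp (h ▸ mul_le_left.trans (pow_le_self hk))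
  have hxJ : x ∈ J := (span_singleton_le_iff_mem _).mp (h ▸ mul_le_right)
  have ne_bot {P : Ideal R} (hxP : x ∈ P) : P ≠ ⊥ := fun hP => hx (by simpa [hP] using hxP)
  exact ⟨IsPrime.isMaximal inferInstance (ne_bot hxI), IsPrime.isMaximal inferInstance (ne_bot hxJ)⟩

lemma isMaximal_and_comap_eq_of_map_le [Algebra R S] [Algebra.IsIntegral R S] {P : Ideal R}
    [P.IsMaximal] {Q : Ideal S} [Q.IsPrime] (h : P.map (algebraMap R S) ≤ Q) :
    Q.IsMaximal ∧ Q.comap (algebraMap R S) = P := by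
  have hQP : Q.comap (algebraMap R S) = P :=
    (IsMaximal.eq_of_le inferInstance (IsPrime.comap _).ne_top (map_le_iff_le_comap.mp h)).symm
  exact ⟨isMaximal_of_isIntegral_of_isMaximal_comap Q (by rw [hQP]; infer_instance), hQP⟩

lemma eq_or_eq_or_eq_of_algebraMap_mem [Algebra R S] {x : R} {I J : Ideal R} {k j : ℕ}
    (hk : k ≠ 0) (hj : j ≠ 0) (hx : span {x} = I ^ k * J) {Q₁ Q₁' Q₂ : Ideal S} [Q₁.IsMaximal]
    [Q₁'.IsMaximal] [Q₂.IsMaximal] (hI : I.map (algebraMap R S) = Q₁ * Q₁')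
    (hJ : J.map (algebraMap R S) = Q₂ ^ j) {Q : Ideal S} [hQ : Q.IsPrime]
    (h : algebraMap R S x ∈ Q) : Q = Q₁ ∨ Q = Q₁' ∨ Q = Q₂ := by
  have hle : (Q₁ * Q₁') ^ k * Q₂ ^ j ≤ Q := by
    rw [← hI, ← hJ, ← Ideal.map_pow, ← Ideal.map_mul, ← hx, map_span, Set.image_singleton,
      span_singleton_le_iff_mem]
    exact h
  have eq_of_le {Q' : Ideal S} [Q'.IsMaximal] (h' : Q' ≤ Q) : Q = Q' :=
    (IsMaximal.eq_of_le inferInstance hQ.ne_top h').symm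
  rcases hQ.mul_le.mp hle with h₁ | h₂
  · rcases hQ.mul_le.mp ((IsPrime.pow_le_iff hk).mp h₁) with h₁ | h₁'
    exacts [.inl (eq_of_le h₁), .inr (.inl (eq_of_le h₁'))]
  · exact .inr (.inr (eq_of_le ((IsPrime.pow_le_iff hj).mp h₂)))

end Ideal

section legSym

variable {R S : Type*} [CommRing R] [CommRing S]

open scoped Classical in
lemma legSym_eq_ite_isSquare (x : R) (P : Ideal R) :
    legSym x P = if IsSquare (Ideal.Quotient.mk P x) then 1 else -1 := by
  have hsq : (∃ y : R, x - y ^ 2 ∈ P) ↔ IsSquare (Ideal.Quotient.mk P x) := by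
    simp only [← Ideal.Quotient.mk_eq_mk_iff_sub_mem, IsSquare, ← sq,
      Ideal.Quotient.mk_surjective.exists, map_pow, eq_comm]
  simp only [legSym, hsq]

lemma legSym_eq_of_quotient_ringEquiv {P : Ideal R} {Q : Ideal S} (e : R ⧸ P ≃+* S ⧸ Q)
    {x : R} {y : S} (h : e (Ideal.Quotient.mk P x) = Ideal.Quotient.mk Q y) :
    legSym x P = legSym y Q := by
  have hsq : IsSquare (Ideal.Quotient.mk P x) ↔ IsSquare (Ideal.Quotient.mk Q y) :=
    ⟨fun hx => h ▸ hx.map e, fun hy => by rw [← h] at hy; simpa using hy.map e.symm⟩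
  classical
  rw [legSym_eq_ite_isSquare, legSym_eq_ite_isSquare]
  exact if_congr hsq rfl rfl

lemma legSym_map_ringEquiv (e : R ≃+* S) (x : R) (I : Ideal R) :
    legSym (e x) (I.map e) = legSym x I :=
  (legSym_eq_of_quotient_ringEquiv (Ideal.quotientEquiv I _ e rfl) rfl).symm

lemma legSym_eq_legSym_algebraMap_of_card_eq [Algebra R S] {P : Ideal R} {Q : Ideal S}
    [P.IsMaximal] [Nontrivial (S ⧸ Q)] [Finite (S ⧸ Q)] (hPQ : P ≤ Q.comap (algebraMap R S))
    (hcard : Nat.card (R ⧸ P) = Nat.card (S ⧸ Q)) (x : R) :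
    legSym x P = legSym (algebraMap R S x) Q := by
  let := Ideal.Quotient.field P
  let φ : R ⧸ P →+* S ⧸ Q := Ideal.quotientMap Q (algebraMap R S) hPQ
  have hφ : Function.Bijective φ :=
    (Nat.bijective_iff_injective_and_card φ).mpr ⟨φ.injective, hcard⟩
  exact legSym_eq_of_quotient_ringEquiv (.ofBijective φ hφ) (Ideal.quotientMap_mk (H := hPQ))

lemma legSym_mul (P : Ideal R) [P.IsMaximal] [Finite (R ⧸ P)] {a b : R} (ha : a ∉ P)
    (hb : b ∉ P) : legSym (a * b) P = legSym a P * legSym b P := by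
  classical
  let := Ideal.Quotient.field P
  let := Fintype.ofFinite (R ⧸ P)
  have hchar {x : R} (hx : x ∉ P) :
      legSym x P = quadraticChar (R ⧸ P) (Ideal.Quotient.mk P x) := by
    have hx0 : Ideal.Quotient.mk P x ≠ 0 := by rwa [ne_eq, Ideal.Quotient.eq_zero_iff_mem]
    rw [legSym_eq_ite_isSquare]
    split_ifs with h
    · rw [(quadraticChar_one_iff_isSquare hx0).mpr h]
    · rw [quadraticChar_neg_one_iff_not_isSquare.mpr h]
  rw [hchar ha, hchar hb, hchar (Ideal.IsPrime.mul_notMem inferInstance ha hb), map_mul,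
    map_mul]

end legSym

section galMapIdeal

variable {M : Type*} [Field M] [NumberField M]

lemma galMapIdeal_mul (g h : M ≃ₐ[ℚ] M) (I : Ideal (𝓞 M)) :
    galMapIdeal (g * h) I = galMapIdeal g (galMapIdeal h I) := by
  simp only [galMapIdeal, map_mul]
  exact (Ideal.map_map (galRestrict ℤ ℚ M (𝓞 M) h).toRingHom
    (galRestrict ℤ ℚ M (𝓞 M) g).toRingHom).symm

lemma galMapIdeal_one (I : Ideal (𝓞 M)) : galMapIdeal 1 I = I := by
  simp only [galMapIdeal, map_one]
  exact Ideal.map_id I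

lemma galMapIdeal_injective (g : M ≃ₐ[ℚ] M) : Function.Injective (galMapIdeal g) :=
  Function.LeftInverse.injective (g := galMapIdeal g⁻¹) fun I => by
    rw [← galMapIdeal_mul, inv_mul_cancel, galMapIdeal_one]

lemma galMapIdeal_sq_ne {σ : M ≃ₐ[ℚ] M} {I : Ideal (𝓞 M)} (h : galMapIdeal σ I ≠ I) :
    galMapIdeal (σ ^ 2) I ≠ galMapIdeal σ I := by
  rw [sq, galMapIdeal_mul]
  exact fun h' => h (galMapIdeal_injective σ h')

lemma galMapIdeal_sq_ne_self {σ : M ≃ₐ[ℚ] M} (hσ : σ ^ 3 = 1) {I : Ideal (𝓞 M)}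
    (h : galMapIdeal σ I ≠ I) : galMapIdeal (σ ^ 2) I ≠ I := fun h' => h <|
  calc galMapIdeal σ I = galMapIdeal σ (galMapIdeal (σ ^ 2) I) := by rw [h']
    _ = I := by rw [← galMapIdeal_mul, ← pow_succ', hσ, galMapIdeal_one]

instance galMapIdeal_isMaximal (g : M ≃ₐ[ℚ] M) (I : Ideal (𝓞 M)) [I.IsMaximal] :
    (galMapIdeal g I).IsMaximal :=
  Ideal.map_isMaximal_of_equiv _

lemma natCast_mem_galMapIdeal (g : M ≃ₐ[ℚ] M) {I : Ideal (𝓞 M)} {n : ℕ}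
    (hn : (n : 𝓞 M) ∈ I) : (n : 𝓞 M) ∈ galMapIdeal g I := by
  simpa [galMapIdeal] using Ideal.mem_map_of_mem (galRestrict ℤ ℚ M (𝓞 M) g) hn

lemma absNorm_galMapIdeal (g : M ≃ₐ[ℚ] M) (I : Ideal (𝓞 M)) :
    Ideal.absNorm (galMapIdeal g I) = Ideal.absNorm I := by
  rw [Ideal.absNorm_apply, Ideal.absNorm_apply, Submodule.cardQuot_apply,
    Submodule.cardQuot_apply]
  exact (Nat.card_congr (Ideal.quotientEquiv I _
    ((galRestrict ℤ ℚ M (𝓞 M) g : 𝓞 M ≃+* 𝓞 M)) rfl).toEquiv).symm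

lemma legSym_galRestrict (g : M ≃ₐ[ℚ] M) (x : 𝓞 M) (I : Ideal (𝓞 M)) :
    legSym (galRestrict ℤ ℚ M (𝓞 M) g x) I = legSym x (galMapIdeal g⁻¹ I) := by
  conv_lhs => rw [← galMapIdeal_one I, ← mul_inv_cancel g, galMapIdeal_mul]
  exact legSym_map_ringEquiv (galRestrict ℤ ℚ M (𝓞 M) g).toRingEquiv x _

end galMapIdeal

section Extension

variable {L M : Type*} [Field L] [Field M] [Algebra L M]

lemma algebraMap_ringOfIntegers_eq {α : 𝓞 L} {x : 𝓞 M}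
    (h : algebraMap L M (algebraMap (𝓞 L) L α) = algebraMap (𝓞 M) M x) :
    algebraMap (𝓞 L) (𝓞 M) α = x := by
  apply RingOfIntegers.coe_injective
  rwa [← IsScalarTower.algebraMap_apply (𝓞 L) (𝓞 M) M,
    IsScalarTower.algebraMap_apply (𝓞 L) L M]

variable [NumberField M]

lemma legSym_eq_legSym_algebraMap_of_map_eq_mul [NumberField L] (hLM : finrank L M = 2)
    {P : Ideal (𝓞 L)} [P.IsMaximal] {Q Q' : Ideal (𝓞 M)} [Q.IsMaximal]
    (hPQ : P.map (algebraMap (𝓞 L) (𝓞 M)) = Q * Q') (hQ' : Ideal.absNorm Q' = Ideal.absNorm Q)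
    (x : 𝓞 L) : legSym x P = legSym (algebraMap (𝓞 L) (𝓞 M) x) Q := by
  have hnorm : Ideal.absNorm P = Ideal.absNorm Q := by
    have h := Ideal.absNorm_algebraMap (𝓞 L) (𝓞 M) P
    rw [hPQ, map_mul, hQ', ← IsFractionRing.finrank_eq (𝓞 L) L (𝓞 M) M, hLM, ← sq] at h
    exact (Nat.pow_left_injective two_ne_zero h).symm
  refine legSym_eq_legSym_algebraMap_of_card_eq
    (Ideal.map_le_iff_le_comap.mp (hPQ ▸ Ideal.mul_le_left)) ?_ x
  simpa only [Ideal.absNorm_apply, Submodule.cardQuot_apply] using hnorm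

lemma legSym_eq_mul_of_algebraMap_eq {P : Ideal (𝓞 L)} {Q : Ideal (𝓞 M)} [Q.IsMaximal]
    (hPQ : ∀ x, legSym x P = legSym (algebraMap (𝓞 L) (𝓞 M) x) Q) {α : 𝓞 L} {ρ : 𝓞 M}
    {g h : M ≃ₐ[ℚ] M}
    (hα : algebraMap L M (algebraMap (𝓞 L) L α) =
      g (algebraMap (𝓞 M) M ρ) * h (algebraMap (𝓞 M) M ρ))
    (hg : galRestrict ℤ ℚ M (𝓞 M) g ρ ∉ Q) (hh : galRestrict ℤ ℚ M (𝓞 M) h ρ ∉ Q) :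
    legSym α P = legSym ρ (galMapIdeal g⁻¹ Q) * legSym ρ (galMapIdeal h⁻¹ Q) := by
  rw [← algebraMap_galRestrict_apply ℤ g, ← algebraMap_galRestrict_apply ℤ h, ← map_mul] at hα
  rw [hPQ, algebraMap_ringOfIntegers_eq hα, legSym_mul Q hg hh, legSym_galRestrict,
    legSym_galRestrict]

end Extension

theorem stmt7_general (L M : Type*) [Field L] [Field M] [NumberField L] [NumberField M]
    [Algebra L M] [IsScalarTower ℚ L M]
    (hL3 : finrank ℚ L = 3)
    (hM6 : finrank ℚ M = 6)
    (σ τ : M ≃ₐ[ℚ] M) (hσ : orderOf σ = 3) (hτ : orderOf τ = 2)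
    (p : ℕ) (hp : p.Prime)
    (ρ₁ : 𝓞 M) (hρp : (p : 𝓞 M) ∈ Ideal.span {ρ₁})
    -- αᵢ = N_{M/L}(σ^{i-1} ρ₁) = (σ^{i-1} ρ₁) · (τ σ^{i-1} ρ₁), as an element of 𝓞 L,
    -- for i = 1, 2
    (α₁ α₂ : 𝓞 L)
    (hα₁ : algebraMap L M (algebraMap (𝓞 L) L α₁) =
      algebraMap (𝓞 M) M ρ₁ * τ (algebraMap (𝓞 M) M ρ₁))
    (hα₂ : algebraMap L M (algebraMap (𝓞 L) L α₂) =
      σ (algebraMap (𝓞 M) M ρ₁) * τ (σ (algebraMap (𝓞 M) M ρ₁)))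
    -- q ≠ p is an odd prime with exactly the two primes 𝔓₁, 𝔓₂ of 𝓞 L above it:
    -- q 𝓞 L = 𝔓₁² 𝔓₂, or q 𝓞 L = 𝔓₁ 𝔓₂ with f(𝔓₁/q) = 2
    (q : ℕ) (hq : q.Prime) (hqp : q ≠ p)
    (𝔓₁ 𝔓₂ : Ideal (𝓞 L)) (h𝔓₁prime : 𝔓₁.IsPrime) (h𝔓₂prime : 𝔓₂.IsPrime)
    (h𝔓ne : 𝔓₁ ≠ 𝔓₂)
    (hqfact : Ideal.span {(q : 𝓞 L)} = 𝔓₁ ^ 2 * 𝔓₂ ∨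
      (Ideal.span {(q : 𝓞 L)} = 𝔓₁ * 𝔓₂ ∧ Ideal.absNorm 𝔓₁ = q ^ 2))
    -- 𝔓₁ 𝓞 M = 𝔔₁ · τ𝔔₁, and 𝔓₂ 𝓞 M = 𝔔₂² or 𝔔₂
    (𝔔₁ 𝔔₂ : Ideal (𝓞 M)) (h𝔔₁prime : 𝔔₁.IsPrime) (h𝔔₂prime : 𝔔₂.IsPrime)
    (h𝔔₁ : Ideal.map (algebraMap (𝓞 L) (𝓞 M)) 𝔓₁ = 𝔔₁ * galMapIdeal τ 𝔔₁)
    (h𝔔₂ : Ideal.map (algebraMap (𝓞 L) (𝓞 M)) 𝔓₂ = 𝔔₂ ^ 2 ∨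
      Ideal.map (algebraMap (𝓞 L) (𝓞 M)) 𝔓₂ = 𝔔₂)
    -- 𝔔₃ = σ² 𝔔₁
    (𝔔₃ : Ideal (𝓞 M)) (h𝔔₃ : 𝔔₃ = galMapIdeal (σ ^ 2) 𝔔₁) :
    legSym α₁ 𝔓₁ = legSym ρ₁ 𝔔₁ * legSym ρ₁ (galMapIdeal τ 𝔔₁) ∧
    (galMapIdeal σ 𝔔₁ = galMapIdeal τ 𝔔₁ →
      legSym α₂ 𝔓₁ = legSym ρ₁ 𝔔₃ * legSym ρ₁ 𝔔₁) ∧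
    (galMapIdeal σ 𝔔₁ = 𝔔₂ →
      legSym α₂ 𝔓₁ = legSym ρ₁ 𝔔₃ * legSym ρ₁ 𝔔₂) := by
  have hσ3 : σ ^ 3 = 1 := hσ ▸ pow_orderOf_eq_one σ
  have hσinv : σ⁻¹ = σ ^ 2 := inv_eq_of_mul_eq_one_right (by rw [← pow_succ', hσ3])
  have hτinv : τ⁻¹ = τ := inv_eq_self_of_orderOf_eq_two hτ
  have hLM : finrank L M = 2 := by
    have := Module.finrank_mul_finrank ℚ L M
    rw [hL3, hM6] at this
    omega
  obtain ⟨k, hk, hqk⟩ : ∃ k ≠ 0, Ideal.span {(q : 𝓞 L)} = 𝔓₁ ^ k * 𝔓₂ := by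
    rcases hqfact with h | ⟨h, -⟩
    exacts [⟨2, two_ne_zero, h⟩, ⟨1, one_ne_zero, by rw [h, pow_one]⟩]
  obtain ⟨j, hj, h𝔔₂j⟩ : ∃ j ≠ 0, Ideal.map (algebraMap (𝓞 L) (𝓞 M)) 𝔓₂ = 𝔔₂ ^ j := by
    rcases h𝔔₂ with h | h
    exacts [⟨2, two_ne_zero, h⟩, ⟨1, one_ne_zero, by rw [h, pow_one]⟩]
  obtain ⟨_, _⟩ :=
    Ideal.isMaximal_of_span_singleton_eq_pow_mul (by exact_mod_cast hq.ne_zero) hk hqk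
  obtain ⟨_, h𝔔₁𝔓₁⟩ := Ideal.isMaximal_and_comap_eq_of_map_le (h𝔔₁ ▸ Ideal.mul_le_left)
  obtain ⟨_, h𝔔₂𝔓₂⟩ := Ideal.isMaximal_and_comap_eq_of_map_le (h𝔔₂j ▸ Ideal.pow_le_self hj)
  have h𝔔ne : 𝔔₁ ≠ 𝔔₂ := fun h => h𝔓ne (h𝔔₁𝔓₁.symm.trans (h ▸ h𝔔₂𝔓₂))
  have hq𝔔₁ : (q : 𝓞 M) ∈ 𝔔₁ := by
    have hq𝔓₁ : Ideal.span {(q : 𝓞 L)} ≤ 𝔓₁ := hqk ▸ Ideal.mul_le_left.trans (Ideal.pow_le_self hk)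
    simpa [← h𝔔₁𝔓₁] using hq𝔓₁
  have hres := legSym_eq_legSym_algebraMap_of_map_eq_mul hLM h𝔔₁ (absNorm_galMapIdeal τ 𝔔₁)
  have hρ (g : M ≃ₐ[ℚ] M) : galRestrict ℤ ℚ M (𝓞 M) g ρ₁ ∉ 𝔔₁ :=
    Ideal.notMem_of_dvd_natCast_of_coprime h𝔔₁prime.ne_top
      ((Nat.coprime_primes hp hq).mpr hqp.symm) hq𝔔₁
      (by simpa using map_dvd (galRestrict ℤ ℚ M (𝓞 M) g) (Ideal.mem_span_singleton.mp hρp))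
  have hα₂' : legSym α₂ 𝔓₁ = legSym ρ₁ 𝔔₃ * legSym ρ₁ (galMapIdeal (σ ^ 2 * τ) 𝔔₁) := by
    rw [legSym_eq_mul_of_algebraMap_eq hres (g := σ) (h := τ * σ) hα₂ (hρ σ) (hρ (τ * σ)),
      mul_inv_rev, hτinv, hσinv, h𝔔₃]
  refine ⟨?_, fun h => ?_, fun h => ?_⟩
  · rw [legSym_eq_mul_of_algebraMap_eq hres (g := 1) (h := τ) hα₁ (hρ 1) (hρ τ), inv_one,
      galMapIdeal_one, hτinv]
  · rw [hα₂', galMapIdeal_mul, ← h, ← galMapIdeal_mul, ← pow_succ, hσ3, galMapIdeal_one]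
  · have hσ𝔔₁ : galMapIdeal σ 𝔔₁ ≠ 𝔔₁ := h ▸ h𝔔ne.symm
    have hσ2 : galMapIdeal (σ ^ 2) 𝔔₁ = galMapIdeal τ 𝔔₁ := by
      obtain h' | h' | h' := Ideal.eq_or_eq_or_eq_of_algebraMap_mem hk hj hqk h𝔔₁ h𝔔₂j
        (Q := galMapIdeal (σ ^ 2) 𝔔₁) (by simpa using natCast_mem_galMapIdeal (σ ^ 2) hq𝔔₁)
      · exact absurd h' (galMapIdeal_sq_ne_self hσ3 hσ𝔔₁)
      · exact h'
      · exact absurd (h'.trans h.symm) (galMapIdeal_sq_ne hσ𝔔₁)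
    rw [hα₂', galMapIdeal_mul, ← hσ2, ← galMapIdeal_mul, ← pow_add,
      show σ ^ (2 + 2) = σ by rw [show 2 + 2 = 3 + 1 by norm_num, pow_succ, hσ3, one_mul], h]

theorem stmt7 (L M : Type*) [Field L] [Field M] [NumberField L] [NumberField M]
    [Algebra L M] [IsScalarTower ℚ L M]
    (hL3 : finrank ℚ L = 3) (hLnG : ¬ IsGalois ℚ L)
    (hMGal : IsGalois ℚ M) (hM6 : finrank ℚ M = 6)
    (σ τ : M ≃ₐ[ℚ] M) (hσ : orderOf σ = 3) (hτ : orderOf τ = 2)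
    (hτL : ∀ x : L, τ (algebraMap L M x) = algebraMap L M x)
    (p : ℕ) (hp : p.Prime) (hpodd : p ≠ 2) (hpsplit : SplitsCompletelyIn M p)
    (ρ₁ : 𝓞 M) (hρprime : Prime ρ₁) (hρp : (p : 𝓞 M) ∈ Ideal.span {ρ₁})
    -- αᵢ = N_{M/L}(σ^{i-1} ρ₁) = (σ^{i-1} ρ₁) · (τ σ^{i-1} ρ₁), as an element of 𝓞 L,
    -- for i = 1, 2
    (α₁ α₂ : 𝓞 L)
    (hα₁ : algebraMap L M (algebraMap (𝓞 L) L α₁) =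
      algebraMap (𝓞 M) M ρ₁ * τ (algebraMap (𝓞 M) M ρ₁))
    (hα₂ : algebraMap L M (algebraMap (𝓞 L) L α₂) =
      σ (algebraMap (𝓞 M) M ρ₁) * τ (σ (algebraMap (𝓞 M) M ρ₁)))
    -- q ≠ p is an odd prime with exactly the two primes 𝔓₁, 𝔓₂ of 𝓞 L above it:
    -- q 𝓞 L = 𝔓₁² 𝔓₂, or q 𝓞 L = 𝔓₁ 𝔓₂ with f(𝔓₁/q) = 2
    (q : ℕ) (hq : q.Prime) (hqodd : q ≠ 2) (hqp : q ≠ p)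
    (𝔓₁ 𝔓₂ : Ideal (𝓞 L)) (h𝔓₁prime : 𝔓₁.IsPrime) (h𝔓₂prime : 𝔓₂.IsPrime)
    (h𝔓ne : 𝔓₁ ≠ 𝔓₂)
    (hqfact : Ideal.span {(q : 𝓞 L)} = 𝔓₁ ^ 2 * 𝔓₂ ∨
      (Ideal.span {(q : 𝓞 L)} = 𝔓₁ * 𝔓₂ ∧ Ideal.absNorm 𝔓₁ = q ^ 2))
    -- 𝔓₁ 𝓞 M = 𝔔₁ · τ𝔔₁, and 𝔓₂ 𝓞 M = 𝔔₂² or 𝔔₂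
    (𝔔₁ 𝔔₂ : Ideal (𝓞 M)) (h𝔔₁prime : 𝔔₁.IsPrime) (h𝔔₂prime : 𝔔₂.IsPrime)
    (h𝔔₁ : Ideal.map (algebraMap (𝓞 L) (𝓞 M)) 𝔓₁ = 𝔔₁ * galMapIdeal τ 𝔔₁)
    (h𝔔₂ : Ideal.map (algebraMap (𝓞 L) (𝓞 M)) 𝔓₂ = 𝔔₂ ^ 2 ∨
      Ideal.map (algebraMap (𝓞 L) (𝓞 M)) 𝔓₂ = 𝔔₂)
    -- 𝔔₃ = σ² 𝔔₁
    (𝔔₃ : Ideal (𝓞 M)) (h𝔔₃ : 𝔔₃ = galMapIdeal (σ ^ 2) 𝔔₁) :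
    legSym α₁ 𝔓₁ = legSym ρ₁ 𝔔₁ * legSym ρ₁ (galMapIdeal τ 𝔔₁) ∧
    (galMapIdeal σ 𝔔₁ = galMapIdeal τ 𝔔₁ →
      legSym α₂ 𝔓₁ = legSym ρ₁ 𝔔₃ * legSym ρ₁ 𝔔₁) ∧
    (galMapIdeal σ 𝔔₁ = 𝔔₂ →
      legSym α₂ 𝔓₁ = legSym ρ₁ 𝔔₃ * legSym ρ₁ 𝔔₂) :=
  stmt7_general L M hL3 hM6 σ τ hσ hτ p hp ρ₁ hρp α₁ α₂ hα₁ hα₂ q hq hqp 𝔓₁ 𝔓₂ h𝔓₁prime h𝔓₂prime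
    h𝔓ne hqfact 𝔔₁ 𝔔₂ h𝔔₁prime h𝔔₂prime h𝔔₁ h𝔔₂ 𝔔₃ h𝔔₃
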